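/- arXiv:2008.10617 — 5 statements merged into one kernel-verified Lean document; each statement's English description precedes it below -/
import Mathlib

section
/- Let R be a quantum channel from d×d matrices to m×m matrices and let τ = (id_d ⊗ R)(Φ⁺), where Φ⁺ is the density matrix of the maximally entangled state on ℂ^d ⊗ ℂ^d. Then R is a measurement (i.e., there exist density matrices ρ, σ with R(ρ) ≠ R(σ)) if and only if τ is not a product state, i.e. τ ≠ (tr_O τ) ⊗ (tr_A τ), where tr_O is the partial trace over the second (m-dimensional) factor and tr_A the partial trace over the first (d-dimensional) factor. -/
open Matrix Kronecker
open scoped ComplexOrder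

noncomputable section

abbrev Mat (n : ℕ) := Matrix (Fin n) (Fin n) ℂ

/-- A density matrix: positive semidefinite with trace 1. -/
def IsDensity {n : Type*} [Fintype n] (ρ : Matrix n n ℂ) : Prop :=
  ρ.PosSemidef ∧ ρ.trace = 1

/-- The rank-one projector `|ψ⟩⟨ψ|`. -/
def proj {n : Type*} (ψ : n → ℂ) : Matrix n n ℂ :=
  Matrix.of fun i j => ψ i * star (ψ j)

/-- Partial trace over the first tensor factor. -/
def trFst {a b : Type*} [Fintype a] (X : Matrix (a × b) (a × b) ℂ) : Matrix b b ℂ :=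
  Matrix.of fun j l => ∑ i : a, X (i, j) (i, l)

/-- Partial trace over the second tensor factor. -/
def trSnd {a b : Type*} [Fintype b] (X : Matrix (a × b) (a × b) ℂ) : Matrix a a ℂ :=
  Matrix.of fun i k => ∑ j : b, X (i, j) (k, j)

/-- `id ⊗ Φ` acting on matrices over a product index type. -/
def idTensor {k d m : Type*} (Φ : Matrix d d ℂ → Matrix m m ℂ)
    (X : Matrix (k × d) (k × d) ℂ) : Matrix (k × m) (k × m) ℂ :=
  Matrix.of fun p q => Φ (Matrix.of fun j l => X (p.1, j) (q.1, l)) p.2 q.2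

/-- Complete positivity. -/
def IsCP {d m : ℕ} (Φ : Mat d → Mat m) : Prop :=
  ∀ (k : ℕ) (X : Matrix (Fin k × Fin d) (Fin k × Fin d) ℂ),
    X.PosSemidef → (idTensor Φ X).PosSemidef

/-- Trace preservation. -/
def IsTP {d m : ℕ} (Φ : Mat d → Mat m) : Prop :=
  ∀ X, (Φ X).trace = X.trace

/-- A quantum channel: linear, completely positive, trace preserving. -/
def IsChannel {d m : ℕ} (Φ : Mat d → Mat m) : Prop :=
  IsLinearMap ℂ Φ ∧ IsCP Φ ∧ IsTP Φ

/-- The maximally entangled unit vector `|Φ⁺⟩ = (1/√d) ∑ₖ |k⟩⊗|k⟩`. -/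
def phiPlusVec (d : ℕ) : Fin d × Fin d → ℂ :=
  fun p => if p.1 = p.2 then ((Real.sqrt d : ℝ) : ℂ)⁻¹ else 0

/-- The density matrix of the maximally entangled state. -/
def phiPlus (d : ℕ) : Matrix (Fin d × Fin d) (Fin d × Fin d) ℂ :=
  proj (phiPlusVec d)

/-- Von Neumann entropy `S(ρ) = -∑ λᵢ log λᵢ` over the eigenvalues of `ρ`. -/
def entropy {n : Type*} [Fintype n] [DecidableEq n] (ρ : Matrix n n ℂ) : ℝ :=
  if h : ρ.IsHermitian then -∑ i, h.eigenvalues i * Real.log (h.eigenvalues i) else 0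

/-- Quantum mutual information of a bipartite state. -/
def mutualInfo {a b : Type*} [Fintype a] [Fintype b] [DecidableEq a] [DecidableEq b]
    (τ : Matrix (a × b) (a × b) ℂ) : ℝ :=
  entropy (trSnd τ) + entropy (trFst τ) - entropy τ


/-! Entrywise, `τ (i, p) (k, q) = d⁻¹ R(Eᵢₖ) p q`; trace preservation gives `tr_O τ = d⁻¹ 1` and
linearity gives `tr_A τ = d⁻¹ R 1`, so `τ` is a product state exactly when `R X = tr X • ω` for a
fixed `ω`. On the other hand `R` is constant on density matrices exactly when it has this form:
a nonzero rank-one projector is a positive multiple of a density matrix, and by polarization these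
projectors span all matrices. -/

theorem proj_eq_vecMulVec {n : Type*} (ψ : n → ℂ) : proj ψ = vecMulVec ψ (star ψ) := rfl

theorem vecMulVec_star_eq_polarization {n : Type*} (u w : n → ℂ) :
    vecMulVec u (star w) = (4 : ℂ)⁻¹ • (proj (u + w) - proj (u - w)
      + Complex.I • proj (u + Complex.I • w) - Complex.I • proj (u - Complex.I • w)) := by
  ext i j
  simp only [proj, vecMulVec, of_apply, Matrix.smul_apply, Matrix.sub_apply, Matrix.add_apply,
    Pi.add_apply, Pi.sub_apply, Pi.smul_apply, Pi.star_apply, smul_eq_mul, star_add, star_sub,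
    star_mul', Complex.star_def, Complex.conj_I]
  ring_nf
  rw [Complex.I_sq]
  ring

theorem single_one_eq_proj {n : Type*} [DecidableEq n] (i : n) :
    single i i (1 : ℂ) = proj (Pi.single i 1) := by
  simp [single_eq_single_vecMulVec_single, proj_eq_vecMulVec]

section
variable {n : Type*} [Fintype n]

theorem trace_proj (ψ : n → ℂ) : (proj ψ).trace = ψ ⬝ᵥ star ψ :=
  trace_vecMulVec _ _

theorem isDensity_inv_smul_proj {ψ : n → ℂ} (hψ : ψ ≠ 0) :
    IsDensity ((ψ ⬝ᵥ star ψ)⁻¹ • proj ψ) := by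
  have hpos : (0 : ℂ) ≤ (ψ ⬝ᵥ star ψ)⁻¹ := inv_nonneg.2 (dotProduct_self_star_nonneg ψ)
  refine ⟨(posSemidef_vecMulVec_self_star ψ).smul hpos, ?_⟩
  rw [trace_smul, trace_proj, smul_eq_mul, inv_mul_cancel₀ (by simpa using hψ)]

variable [DecidableEq n]

theorem isDensity_single_one (i : n) : IsDensity (single i i (1 : ℂ)) :=
  ⟨single_one_eq_proj i ▸ posSemidef_vecMulVec_self_star _, trace_single_eq_same _ _⟩

variable {M : Type*} [AddCommGroup M] [Module ℂ M]

theorem ext_proj {f g : Matrix n n ℂ →ₗ[ℂ] M} (h : ∀ ψ, f (proj ψ) = g (proj ψ)) : f = g := by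
  refine ext_linearMap ℂ fun i j => LinearMap.ext_ring ?_
  simp only [LinearMap.comp_apply, singleLinearMap_apply, single_eq_single_vecMulVec_single]
  rw [show (Pi.single j 1 : n → ℂ) = star (Pi.single j 1) by simp,
    vecMulVec_star_eq_polarization]
  simp only [map_smul, map_add, map_sub, h]

theorem eq_trace_smul_of_forall_isDensity (L : Matrix n n ℂ →ₗ[ℂ] M) (ω : M)
    (h : ∀ ρ, IsDensity ρ → L ρ = ω) (X : Matrix n n ℂ) : L X = X.trace • ω := by
  suffices L = (traceLinearMap n ℂ ℂ).smulRight ω from congr($this X)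
  refine ext_proj fun ψ => ?_
  rcases eq_or_ne ψ 0 with rfl | hψ
  · simp [proj_eq_vecMulVec]
  have hc : ψ ⬝ᵥ star ψ ≠ 0 := by simpa using hψ
  calc L (proj ψ) = (ψ ⬝ᵥ star ψ) • L ((ψ ⬝ᵥ star ψ)⁻¹ • proj ψ) := by
        rw [map_smul, smul_inv_smul₀ hc]
    _ = _ := by simp [h _ (isDensity_inv_smul_proj hψ), trace_proj]

theorem forall_isDensity_eq_iff (L : Matrix n n ℂ →ₗ[ℂ] M) :
    (∀ ρ σ, IsDensity ρ → IsDensity σ → L ρ = L σ) ↔ ∃ ω, ∀ X, L X = X.trace • ω := by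
  refine ⟨fun h => ?_, fun ⟨ω, hω⟩ ρ σ hρ hσ => by rw [hω, hω, hρ.2, hσ.2]⟩
  cases isEmpty_or_nonempty n with
  | inl _ => exact ⟨0, fun X => by simp [Subsingleton.elim X 0]⟩
  | inr hn =>
    obtain ⟨i⟩ := hn
    exact ⟨_, eq_trace_smul_of_forall_isDensity L _ fun ρ hρ => h ρ _ hρ (isDensity_single_one i)⟩

end

section
variable {d : ℕ} {m : Type*}

theorem phiPlus_slice (i k : Fin d) :
    (of fun j l => phiPlus d (i, j) (k, l)) = (d : ℂ)⁻¹ • single i k (1 : ℂ) := by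
  have hc : ((Real.sqrt d : ℝ) : ℂ)⁻¹ * ((Real.sqrt d : ℝ) : ℂ)⁻¹ = (d : ℂ)⁻¹ := by
    rw [← mul_inv, ← Complex.ofReal_mul, Real.mul_self_sqrt d.cast_nonneg, Complex.ofReal_natCast]
  ext j l
  by_cases hij : i = j <;> by_cases hkl : k = l <;>
    simp [phiPlus, proj, phiPlusVec, single, hij, hkl, hc, Complex.conj_ofReal]

theorem idTensor_phiPlus_apply (L : Mat d →ₗ[ℂ] Matrix m m ℂ) (i k : Fin d) (p q : m) :
    idTensor L (phiPlus d) (i, p) (k, q) = (d : ℂ)⁻¹ * L (single i k 1) p q := by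
  rw [idTensor, of_apply, phiPlus_slice, map_smul]
  rfl

theorem trFst_idTensor_phiPlus (L : Mat d →ₗ[ℂ] Matrix m m ℂ) :
    trFst (idTensor L (phiPlus d)) = (d : ℂ)⁻¹ • L 1 := by
  ext p q
  simp only [trFst, of_apply, idTensor_phiPlus_apply, ← Finset.mul_sum, Matrix.smul_apply,
    smul_eq_mul, ← Matrix.sum_apply, ← map_sum, sum_single_one]

variable [Fintype m]

theorem trSnd_idTensor_phiPlus (L : Mat d →ₗ[ℂ] Matrix m m ℂ)
    (hL : ∀ X, (L X).trace = X.trace) : trSnd (idTensor L (phiPlus d)) = (d : ℂ)⁻¹ • 1 := by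
  ext i k
  simp only [trSnd, of_apply, idTensor_phiPlus_apply, ← Finset.mul_sum]
  rw [show ∑ j, L (single i k 1) j j = (L (single i k 1)).trace from rfl, hL]
  rcases eq_or_ne i k with rfl | hik
  · simp
  · simp [hik, trace_single_eq_of_ne]

theorem idTensor_phiPlus_eq_kronecker_iff (L : Mat d →ₗ[ℂ] Matrix m m ℂ)
    (hL : ∀ X, (L X).trace = X.trace) :
    idTensor L (phiPlus d) = trSnd (idTensor L (phiPlus d)) ⊗ₖ trFst (idTensor L (phiPlus d)) ↔
      ∃ ω, ∀ X, L X = X.trace • ω := by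
  rw [trSnd_idTensor_phiPlus L hL, trFst_idTensor_phiPlus]
  rcases d.eq_zero_or_pos with rfl | hpos
  · exact iff_of_true (Subsingleton.elim _ _) ⟨0, fun X => by simp [Subsingleton.elim X 0]⟩
  have hd : (d : ℂ) ≠ 0 := by exact_mod_cast hpos.ne'
  constructor
  · intro h
    refine ⟨(d : ℂ)⁻¹ • L 1, fun X => ?_⟩
    suffices L = (traceLinearMap (Fin d) ℂ ℂ).smulRight ((d : ℂ)⁻¹ • L 1) from congr($this X)
    refine ext_linearMap ℂ fun i k => LinearMap.ext_ring ?_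
    ext p q
    have hik := congr_fun (congr_fun h (i, p)) (k, q)
    rw [idTensor_phiPlus_apply, kroneckerMap_apply] at hik
    rcases eq_or_ne i k with rfl | hne
    · simpa [hd] using hik
    · simpa [hd, hne, trace_single_eq_of_ne] using hik
  · rintro ⟨ω, hω⟩
    ext ⟨i, p⟩ ⟨k, q⟩
    rw [idTensor_phiPlus_apply, kroneckerMap_apply, hω, hω]
    rcases eq_or_ne i k with rfl | hne
    · simp [hd]
    · simp [hne, trace_single_eq_of_ne]

end

/-- A channel is a measurement iff its Choi-type state `(id ⊗ R)(Φ⁺)` is not a product state. -/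
theorem stmt_1 (d m : ℕ) (R : Mat d → Mat m) (hR : IsChannel R)
    (τ : Matrix (Fin d × Fin m) (Fin d × Fin m) ℂ)
    (hτ : τ = idTensor R (phiPlus d)) :
    (∃ ρ σ : Mat d, IsDensity ρ ∧ IsDensity σ ∧ R ρ ≠ R σ) ↔
      τ ≠ (trSnd τ) ⊗ₖ (trFst τ) := by
  obtain ⟨hlin, -, htp⟩ := hR
  obtain ⟨L, rfl⟩ : ∃ L : Mat d →ₗ[ℂ] Mat m, ⇑L = R := ⟨IsLinearMap.mk' R hlin, rfl⟩
  subst hτ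
  rw [Ne, idTensor_phiPlus_eq_kronecker_iff L htp, ← forall_isDensity_eq_iff]
  simp only [Ne, not_forall, exists_prop]

end
end

section
/- Let τ be a density matrix on ℂ^d ⊗ ℂ^m whose first marginal is maximally mixed, tr_O τ = (1/d) I_d. Then τ is a product state, τ = (tr_O τ) ⊗ (tr_A τ), if and only if for every rank-one orthogonal projector Π on ℂ^d one has tr_A((Π ⊗ I_m) τ) = (1/d) · tr_A(τ). -/
open Matrix Kronecker
open scoped ComplexOrder

noncomputable section

/-! The `(j, l)` entry of `tr_A ((|v⟩⟨v| ⊗ I) τ)` is the quadratic form `v* B v` of the block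
`B = (τ (k, j) (i, l))_{k,i}`, and `τ = (1/d) I ⊗ σ` says exactly that every such block is
`σ j l / d • I`. Over `ℂ` polarization recovers a matrix from its quadratic form, and by homogeneity
already from its values on unit vectors, so `v* B v = c` for all unit `v` iff `B = c • I`. -/

namespace Matrix

variable {n : Type*} [Fintype n]

theorem eq_zero_of_forall_star_dotProduct_mulVec_eq_zero [DecidableEq n] {B : Matrix n n ℂ}
    (h : ∀ v : n → ℂ, star v ⬝ᵥ B *ᵥ v = 0) : B = 0 := by
  apply toEuclideanLin.injective
  rw [map_zero, ← inner_map_self_eq_zero]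
  intro x
  rw [inner_eq_zero_symm, EuclideanSpace.inner_eq_star_dotProduct, dotProduct_comm]
  exact h x

theorem star_smul_dotProduct_mulVec_smul {R : Type*} [CommRing R] [StarRing R]
    (B : Matrix n n R) (c : R) (v : n → R) :
    star (c • v) ⬝ᵥ B *ᵥ (c • v) = star c * c * (star v ⬝ᵥ B *ᵥ v) := by
  rw [mulVec_smul, star_smul, dotProduct_smul, smul_dotProduct, smul_eq_mul, smul_eq_mul]
  ring

theorem forall_star_dotProduct_mulVec_eq_zero_of_unit {B : Matrix n n ℂ}
    (h : ∀ v : n → ℂ, star v ⬝ᵥ v = 1 → star v ⬝ᵥ B *ᵥ v = 0) (v : n → ℂ) :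
    star v ⬝ᵥ B *ᵥ v = 0 := by
  rcases eq_or_ne v 0 with rfl | hv
  · simp
  obtain ⟨r, hr, hrv⟩ : ∃ r : ℝ, 0 < r ∧ (r : ℂ) = star v ⬝ᵥ v :=
    RCLike.pos_iff_exists_ofReal.1 (dotProduct_star_self_pos_iff.2 hv)
  set c : ℂ := (((Real.sqrt r)⁻¹ : ℝ) : ℂ)
  have hc : star c * c * r = 1 := by
    simp only [c, Complex.star_def, Complex.conj_ofReal]
    norm_cast
    field_simp
    rw [Real.sq_sqrt hr.le]
  have hunit : star (c • v) ⬝ᵥ (c • v) = 1 := by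
    rw [star_smul, smul_dotProduct, dotProduct_smul, ← hrv, smul_eq_mul, smul_eq_mul, ← hc]
    ring
  have hzero := h _ hunit
  rw [star_smul_dotProduct_mulVec_smul] at hzero
  exact (mul_eq_zero.1 hzero).resolve_left (left_ne_zero_of_mul_eq_one hc)

theorem eq_smul_one_iff_forall_unit [DecidableEq n] (B : Matrix n n ℂ) (c : ℂ) :
    B = c • 1 ↔ ∀ v : n → ℂ, star v ⬝ᵥ v = 1 → star v ⬝ᵥ B *ᵥ v = c := by
  have quad_smul_one (v : n → ℂ) : star v ⬝ᵥ (c • 1 : Matrix n n ℂ) *ᵥ v = c * (star v ⬝ᵥ v) := by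
    rw [smul_mulVec, one_mulVec, dotProduct_smul, smul_eq_mul]
  constructor
  · rintro rfl v hv
    rw [quad_smul_one, hv, mul_one]
  · intro h
    rw [← sub_eq_zero]
    refine eq_zero_of_forall_star_dotProduct_mulVec_eq_zero
      (forall_star_dotProduct_mulVec_eq_zero_of_unit fun v hv => ?_)
    rw [sub_mulVec, dotProduct_sub, quad_smul_one, h v hv, hv, mul_one, sub_self]

end Matrix

def blockSnd {a b R : Type*} (τ : Matrix (a × b) (a × b) R) (j l : b) : Matrix a a R :=
  of fun k i => τ (k, j) (i, l)

theorem eq_kronecker_iff_blockSnd {a b R : Type*} [CommSemiring R]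
    (τ : Matrix (a × b) (a × b) R) (A : Matrix a a R) (σ : Matrix b b R) :
    τ = A ⊗ₖ σ ↔ ∀ j l, blockSnd τ j l = σ j l • A := by
  simp only [← Matrix.ext_iff, Prod.forall, blockSnd, of_apply, kroneckerMap_apply,
    Matrix.smul_apply, smul_eq_mul, mul_comm]
  exact ⟨fun h j l k i => h k j i l, fun h k j i l => h j l k i⟩

theorem trFst_proj_kronecker_one_mul_apply {a b : Type*} [Fintype a] [Fintype b] [DecidableEq b]
    (v : a → ℂ) (τ : Matrix (a × b) (a × b) ℂ) (j l : b) :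
    trFst ((proj v ⊗ₖ (1 : Matrix b b ℂ)) * τ) j l = star v ⬝ᵥ blockSnd τ j l *ᵥ v := by
  simp only [trFst, blockSnd, proj, of_apply, mul_apply, Fintype.sum_prod_type, kroneckerMap_apply,
    one_apply, mul_ite, mul_one, mul_zero, ite_mul, zero_mul, Finset.sum_ite_eq, Finset.mem_univ,
    if_true, dotProduct, mulVec, Pi.star_apply, Finset.mul_sum]
  rw [Finset.sum_comm]
  exact Finset.sum_congr rfl fun _ _ => Finset.sum_congr rfl fun _ _ => by ring

theorem stmt_3_general (d m : ℕ) (τ : Matrix (Fin d × Fin m) (Fin d × Fin m) ℂ)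
    (hmarg : trSnd τ = ((d : ℂ))⁻¹ • 1) :
    τ = (trSnd τ) ⊗ₖ (trFst τ) ↔
      ∀ v : Fin d → ℂ, star v ⬝ᵥ v = 1 →
        trFst ((proj v ⊗ₖ (1 : Mat m)) * τ) = ((d : ℂ))⁻¹ • trFst τ := by
  rw [hmarg, eq_kronecker_iff_blockSnd]
  simp_rw [smul_smul, eq_smul_one_iff_forall_unit, ← trFst_proj_kronecker_one_mul_apply]
  constructor
  · intro h v hv
    ext j l
    rw [h j l v hv, Matrix.smul_apply, smul_eq_mul, mul_comm]
  · intro h j l v hv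
    rw [h v hv, Matrix.smul_apply, smul_eq_mul, mul_comm]

/-- For a bipartite state with maximally mixed first marginal: it is a product state iff
every rank-one projector on the first system steers the second system to the same state. -/
theorem stmt_3 (d m : ℕ) (τ : Matrix (Fin d × Fin m) (Fin d × Fin m) ℂ)
    (hτ : IsDensity τ) (hmarg : trSnd τ = ((d : ℂ))⁻¹ • 1) :
    τ = (trSnd τ) ⊗ₖ (trFst τ) ↔
      ∀ v : Fin d → ℂ, star v ⬝ᵥ v = 1 →
        trFst ((proj v ⊗ₖ (1 : Mat m)) * τ) = ((d : ℂ))⁻¹ • trFst τ :=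
  stmt_3_general d m τ hmarg
end
end

section
/- Consider a measurement procedure given by a unitary U on ℂ^d ⊗ ℂ^e ⊗ ℂ^o and a density matrix χ on ℂ^e ⊗ ℂ^o, with result channel R(ρ) = tr_{SE}[U(ρ⊗χ)U†] and disturbance channel D(ρ) = tr_{EO}[U(ρ⊗χ)U†]. Let Φ⁺ be the maximally entangled state on ℂ^d ⊗ ℂ^d (ancilla A and system S). If there exist density matrices ρ, σ on ℂ^d with R(ρ) ≠ R(σ) (i.e., the procedure is a measurement), then I_{A:S}((id_d ⊗ D)(Φ⁺)) < 2 log d; equivalently, the back-action B[M] = 2 log d − I_{A:S}((id_d ⊗ D)(Φ⁺)) is strictly positive: every measurement has nonzero back-action. -/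
open Matrix Kronecker
open scoped ComplexOrder

noncomputable section

/-- Partial trace over the first two factors of a tripartite matrix on `S ⊗ E ⊗ O`. -/
def trSE {d e o : Type*} [Fintype d] [Fintype e]
    (X : Matrix (d × e × o) (d × e × o) ℂ) : Matrix o o ℂ :=
  Matrix.of fun j l => ∑ i : d, ∑ k : e, X (i, k, j) (i, k, l)

/-!
If `I(A:S) ≥ 2 log d`, then, since both marginals of `τ = (id ⊗ D)(Φ⁺)` have entropy at most
`log d`, the state `τ` has entropy `≤ 0` and is therefore pure, `τ = |w⟩⟨w|`. But `τ` is the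
ancilla-system marginal of the positive matrix `Ω = (1 ⊗ U)(Φ⁺ ⊗ χ)(1 ⊗ U)†`, and a positive
matrix with a pure marginal is a product, `Ω = |w⟩⟨w| ⊗ η`. As `U(ρ ⊗ χ)U†` depends linearly on
`ρ` through `Ω`, it is then `X(ρ) ⊗ η` for every `ρ`, so the observer's state
`R(ρ) = tr_E η / tr η` does not depend on `ρ`.
-/

section PartialTrace

variable {a b : Type*}

lemma trSnd_eq_sum_submatrix [Fintype b] (X : Matrix (a × b) (a × b) ℂ) :
    trSnd X = ∑ j, X.submatrix (·, j) (·, j) := by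
  ext i k
  simp [trSnd, Matrix.sum_apply]

lemma trFst_eq_sum_submatrix [Fintype a] (X : Matrix (a × b) (a × b) ℂ) :
    trFst X = ∑ i, X.submatrix (i, ·) (i, ·) := by
  ext j l
  simp [trFst, Matrix.sum_apply]

lemma trSnd_smul [Fintype b] (c : ℂ) (X : Matrix (a × b) (a × b) ℂ) :
    trSnd (c • X) = c • trSnd X := by
  ext i k
  simp [trSnd, Finset.mul_sum]

lemma Matrix.PosSemidef.trSnd [Fintype b] {X : Matrix (a × b) (a × b) ℂ} (hX : X.PosSemidef) :
    (trSnd X).PosSemidef := by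
  rw [trSnd_eq_sum_submatrix]
  exact posSemidef_sum _ fun j _ => hX.submatrix _

lemma Matrix.PosSemidef.trFst [Fintype a] {X : Matrix (a × b) (a × b) ℂ} (hX : X.PosSemidef) :
    (trFst X).PosSemidef := by
  rw [trFst_eq_sum_submatrix]
  exact posSemidef_sum _ fun i _ => hX.submatrix _

variable [Fintype a] [Fintype b]

lemma trace_trSnd (X : Matrix (a × b) (a × b) ℂ) : (trSnd X).trace = X.trace := by
  simp [trSnd, Matrix.trace, Fintype.sum_prod_type]

lemma trace_trFst (X : Matrix (a × b) (a × b) ℂ) : (trFst X).trace = X.trace := by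
  simp [trFst, Matrix.trace, Fintype.sum_prod_type, Finset.sum_comm (γ := a)]

lemma IsDensity.trSnd {X : Matrix (a × b) (a × b) ℂ} (hX : IsDensity X) : IsDensity (trSnd X) :=
  ⟨hX.1.trSnd, (trace_trSnd X).trans hX.2⟩

lemma IsDensity.trFst {X : Matrix (a × b) (a × b) ℂ} (hX : IsDensity X) : IsDensity (trFst X) :=
  ⟨hX.1.trFst, (trace_trFst X).trans hX.2⟩

lemma trSE_kronecker {o : Type*} (X : Matrix a a ℂ) (Y : Matrix (b × o) (b × o) ℂ) :
    trSE (X ⊗ₖ Y) = X.trace • trFst Y := by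
  ext j l
  simp [trSE, trFst, Matrix.trace, kroneckerMap_apply, Finset.sum_mul, Finset.mul_sum,
    Finset.sum_comm (γ := a)]

end PartialTrace

section Entropy

open Real

variable {ι : Type*} [Fintype ι] {p : ι → ℝ}

lemma sum_negMulLog_le_log_card (h0 : ∀ i, 0 ≤ p i) (h1 : ∑ i, p i = 1) :
    ∑ i, negMulLog (p i) ≤ log (Fintype.card ι) := by
  have hN : (0 : ℝ) < Fintype.card ι := by
    have : Nonempty ι := by
      by_contra h
      simp [not_nonempty_iff.mp h] at h1
    exact_mod_cast Fintype.card_pos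
  have hJensen := concaveOn_negMulLog.le_map_sum (t := Finset.univ)
    (w := fun _ => (Fintype.card ι : ℝ)⁻¹) (p := p) (fun _ _ => by positivity)
    (by simp [hN.ne']) (fun i _ => Set.mem_Ici.mpr (h0 i))
  simp only [smul_eq_mul, ← Finset.mul_sum, h1, mul_one] at hJensen
  rw [negMulLog, log_inv] at hJensen
  have := mul_le_mul_of_nonneg_left hJensen hN.le
  field_simp at this
  linarith

lemma exists_eq_single_of_sum_negMulLog_nonpos [DecidableEq ι] (h0 : ∀ i, 0 ≤ p i)
    (h1 : ∑ i, p i = 1) (hS : ∑ i, negMulLog (p i) ≤ 0) : ∃ i, p = Pi.single i 1 := by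
  have hle1 (i : ι) : p i ≤ 1 := h1 ▸ Finset.single_le_sum (fun j _ => h0 j) (Finset.mem_univ i)
  have hzero : ∀ i, negMulLog (p i) = 0 := by
    have := (Finset.sum_eq_zero_iff_of_nonneg fun i _ => negMulLog_nonneg (h0 i) (hle1 i)).mp
      (le_antisymm hS (Finset.sum_nonneg fun i _ => negMulLog_nonneg (h0 i) (hle1 i)))
    exact fun i => this i (Finset.mem_univ i)
  obtain ⟨i, hi⟩ : ∃ i, p i ≠ 0 := by
    by_contra! h
    simp [h] at h1
  have hpi : p i = 1 := by
    rcases mul_eq_zero.mp (hzero i) with h | h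
    · exact absurd (neg_eq_zero.mp h) hi
    · rcases log_eq_zero.mp h with h | h | h
      · exact absurd h hi
      · exact h
      · linarith [h0 i]
  refine ⟨i, funext fun j => ?_⟩
  rw [← Finset.add_sum_erase _ _ (Finset.mem_univ i), hpi, add_eq_left,
    Finset.sum_eq_zero_iff_of_nonneg fun j _ => h0 j] at h1
  rcases eq_or_ne j i with rfl | hj
  · simp [hpi]
  · simp [hj, h1 j (Finset.mem_erase.mpr ⟨hj, Finset.mem_univ j⟩)]

variable {n : Type*} [Fintype n] [DecidableEq n] {ρ : Matrix n n ℂ}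

lemma entropy_eq_sum_negMulLog (h : ρ.IsHermitian) :
    entropy ρ = ∑ i, negMulLog (h.eigenvalues i) := by
  simp [entropy, h, negMulLog]

lemma IsDensity.sum_eigenvalues (hρ : IsDensity ρ) : ∑ i, hρ.1.isHermitian.eigenvalues i = 1 := by
  have := hρ.1.isHermitian.trace_eq_sum_eigenvalues.symm.trans hρ.2
  exact RCLike.ofReal_injective (K := ℂ) (by simpa using this)

lemma IsDensity.entropy_le_log_card (hρ : IsDensity ρ) : entropy ρ ≤ log (Fintype.card n) := by
  rw [entropy_eq_sum_negMulLog hρ.1.isHermitian]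
  exact sum_negMulLog_le_log_card hρ.1.eigenvalues_nonneg hρ.sum_eigenvalues

lemma Matrix.IsHermitian.eq_proj_of_eigenvalues_eq_single (h : ρ.IsHermitian) {i : n}
    (hi : h.eigenvalues = Pi.single i 1) : ρ = proj fun p => h.eigenvectorUnitary p i := by
  conv_lhs => rw [h.spectral_theorem, Unitary.conjStarAlgAut_apply]
  ext p q
  simp [proj, hi, Matrix.mul_apply, Matrix.diagonal_apply, Pi.single_apply, apply_ite]

lemma IsDensity.exists_eq_proj_of_entropy_nonpos (hρ : IsDensity ρ) (hS : entropy ρ ≤ 0) :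
    ∃ w : n → ℂ, star w ⬝ᵥ w = 1 ∧ ρ = proj w := by
  have h := hρ.1.isHermitian
  rw [entropy_eq_sum_negMulLog h] at hS
  obtain ⟨i, hi⟩ :=
    exists_eq_single_of_sum_negMulLog_nonpos hρ.1.eigenvalues_nonneg hρ.sum_eigenvalues hS
  refine ⟨_, ?_, h.eq_proj_of_eigenvalues_eq_single hi⟩
  have := congrFun₂ (Unitary.coe_star_mul_self h.eigenvectorUnitary) i i
  simpa [Matrix.mul_apply, dotProduct] using this

lemma IsDensity.mutualInfo_add_entropy_le {a b : Type*} [Fintype a] [Fintype b] [DecidableEq a]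
    [DecidableEq b] {τ : Matrix (a × b) (a × b) ℂ} (hτ : IsDensity τ) :
    mutualInfo τ + entropy τ ≤ log (Fintype.card a) + log (Fintype.card b) := by
  have := hτ.trSnd.entropy_le_log_card
  have := hτ.trFst.entropy_le_log_card
  rw [mutualInfo]
  linarith

end Entropy

section PureMarginal

variable {α β : Type*} [Fintype α] [Fintype β] {Ω : Matrix (α × β) (α × β) ℂ} {w : α → ℂ}

lemma proj_mulVec (w u : α → ℂ) : proj w *ᵥ u = (star w ⬝ᵥ u) • w := by
  ext x
  simp [proj, mulVec, dotProduct, Finset.mul_sum, mul_left_comm, mul_comm]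

lemma dotProduct_mulVec_tensor_single [DecidableEq β] (Ω : Matrix (α × β) (α × β) ℂ) (u : α → ℂ)
    (b : β) :
    star (fun p : α × β => if p.2 = b then u p.1 else 0) ⬝ᵥ
        Ω *ᵥ (fun p : α × β => if p.2 = b then u p.1 else 0) =
      star u ⬝ᵥ Ω.submatrix (·, b) (·, b) *ᵥ u := by
  simp [dotProduct, mulVec, Fintype.sum_prod_type, apply_ite]

lemma mulVec_tensor_single_eq_zero_of_trSnd_eq_proj [DecidableEq β] (hΩ : Ω.PosSemidef)
    (hm : trSnd Ω = proj w) {u : α → ℂ} (hu : star w ⬝ᵥ u = 0) (b : β) :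
    Ω *ᵥ (fun p : α × β => if p.2 = b then u p.1 else 0) = 0 := by
  refine (hΩ.dotProduct_mulVec_zero_iff _).mp ?_
  -- The quadratic forms of `Ω` at `u ⊗ e_c` are nonnegative and sum to `⟨u, proj w u⟩ = 0`.
  have hsum : ∑ c, star u ⬝ᵥ Ω.submatrix (·, c) (·, c) *ᵥ u = 0 := by
    simp [← dotProduct_sum, ← Matrix.sum_mulVec, ← trSnd_eq_sum_submatrix, hm, proj_mulVec, hu]
  rw [dotProduct_mulVec_tensor_single]
  refine (Finset.sum_eq_zero_iff_of_nonneg fun c _ => ?_).mp hsum b (Finset.mem_univ b)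
  rw [← dotProduct_mulVec_tensor_single]
  exact hΩ.dotProduct_mulVec_nonneg _

lemma apply_eq_star_mul_sum_of_trSnd_eq_proj (hΩ : Ω.PosSemidef) (hw : star w ⬝ᵥ w = 1)
    (hm : trSnd Ω = proj w) (p : α × β) (x : α) (b : β) :
    Ω p (x, b) = star (w x) * ∑ y, Ω p (y, b) * w y := by
  classical
  -- `eₓ - conj (w x) • w` is orthogonal to the unit vector `w`.
  have hu : star w ⬝ᵥ (Pi.single x 1 - star (w x) • w) = 0 := by
    simp [dotProduct_sub, hw]
  have := congrFun (mulVec_tensor_single_eq_zero_of_trSnd_eq_proj hΩ hm hu b) p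
  simp only [mulVec, dotProduct, Fintype.sum_prod_type, Pi.zero_apply] at this
  simpa [mul_sub, Finset.sum_sub_distrib, Pi.single_apply, Finset.mul_sum, mul_left_comm,
    sub_eq_zero] using this

lemma apply_eq_mul_sum_of_trSnd_eq_proj (hΩ : Ω.PosSemidef) (hw : star w ⬝ᵥ w = 1)
    (hm : trSnd Ω = proj w) (x : α) (b : β) (q : α × β) :
    Ω (x, b) q = w x * ∑ y, star (w y) * Ω (y, b) q := by
  rw [← hΩ.isHermitian.apply (x, b) q, apply_eq_star_mul_sum_of_trSnd_eq_proj hΩ hw hm]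
  simp [star_sum, hΩ.isHermitian.apply, mul_comm]

lemma exists_eq_proj_kronecker_of_trSnd_eq_proj (hΩ : Ω.PosSemidef) (hw : star w ⬝ᵥ w = 1)
    (hm : trSnd Ω = proj w) : ∃ ξ : Matrix β β ℂ, Ω = proj w ⊗ₖ ξ := by
  refine ⟨of fun b c => ∑ x, ∑ y, star (w x) * Ω (x, b) (y, c) * w y, ?_⟩
  ext ⟨x, b⟩ ⟨y, c⟩
  rw [apply_eq_star_mul_sum_of_trSnd_eq_proj hΩ hw hm,
    Finset.sum_congr rfl fun y' _ => by rw [apply_eq_mul_sum_of_trSnd_eq_proj hΩ hw hm x b]]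
  simp only [kroneckerMap_apply, proj, of_apply, Finset.mul_sum, Finset.sum_mul]
  rw [Finset.sum_comm]
  refine Finset.sum_congr rfl fun _ _ => Finset.sum_congr rfl fun _ _ => by ring

end PureMarginal

section Choi

variable {n m : Type*} [Fintype n] [Fintype m]

lemma trace_unitary_conj [DecidableEq n] {U : Matrix n n ℂ} (hU : U ∈ unitaryGroup n ℂ)
    (A : Matrix n n ℂ) : (U * A * Uᴴ).trace = A.trace := by
  rw [trace_mul_cycle, ← star_eq_conjTranspose, Unitary.star_mul_self_of_mem hU, one_mul]

variable (U : Matrix (n × m) (n × m) ℂ) (χ : Matrix m m ℂ)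

def choiFactor : Matrix ((n × n) × m) m ℂ :=
  of fun x k => U (x.1.2, x.2) (x.1.1, k)

/-- `(1 ⊗ U)(∑ₐₐ' |a a⟩⟨a' a'| ⊗ χ)(1 ⊗ U)†`, i.e. `card n • Ω` for the Choi-type state
`Ω = (1 ⊗ U)(Φ⁺ ⊗ χ)(1 ⊗ U)†`, indexed as `(ancilla × system) × apparatus`. -/
def choiState : Matrix ((n × n) × m) ((n × n) × m) ℂ :=
  choiFactor U * χ * (choiFactor U)ᴴ

lemma posSemidef_choiState {χ : Matrix m m ℂ} (hχ : χ.PosSemidef) :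
    (choiState U χ).PosSemidef :=
  hχ.mul_mul_conjTranspose_same _

lemma conj_kronecker_apply (M : Matrix n n ℂ) (s s' : n) (k k' : m) :
    (U * (M ⊗ₖ χ) * Uᴴ) (s, k) (s', k') =
      ∑ a, ∑ a', M a a' * choiState U χ ((a, s), k) ((a', s'), k') := by
  simp only [choiState, choiFactor, Matrix.mul_apply, kroneckerMap_apply, Fintype.sum_prod_type,
    conjTranspose_apply, of_apply, Finset.mul_sum, Finset.sum_mul]
  refine (Finset.sum_congr rfl fun _ _ => Finset.sum_comm).trans (Finset.sum_comm.trans ?_)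
  refine Finset.sum_congr rfl fun _ _ => Finset.sum_congr rfl fun _ _ =>
    Finset.sum_congr rfl fun _ _ => Finset.sum_congr rfl fun _ _ => by ring

lemma trace_choiState [DecidableEq n] [DecidableEq m] (hU : U ∈ unitaryGroup (n × m) ℂ) :
    (choiState U χ).trace = Fintype.card n * χ.trace := by
  rw [← trace_one (n := n), ← trace_kronecker, ← trace_unitary_conj hU]
  simp only [trace, diag_apply, Fintype.sum_prod_type, conj_kronecker_apply, one_apply, ite_mul,
    one_mul, zero_mul, Finset.sum_ite_eq, Finset.mem_univ, if_true]
  rw [Finset.sum_comm]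
  exact Finset.sum_congr rfl fun _ _ => Finset.sum_comm

lemma exists_conj_kronecker_eq_kronecker {w : n × n → ℂ} {η : Matrix m m ℂ}
    (hΩ : choiState U χ = proj w ⊗ₖ η) (M : Matrix n n ℂ) :
    ∃ X : Matrix n n ℂ, U * (M ⊗ₖ χ) * Uᴴ = X ⊗ₖ η := by
  refine ⟨of fun s s' => ∑ a, ∑ a', M a a' * (w (a, s) * star (w (a', s'))), ?_⟩
  ext ⟨s, k⟩ ⟨s', k'⟩
  simp [conj_kronecker_apply, hΩ, kroneckerMap_apply, proj, Finset.sum_mul, mul_assoc]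

end Choi

lemma phiPlus_apply {d : ℕ} (a j a' l : Fin d) :
    phiPlus d (a, j) (a', l) = if a = j ∧ a' = l then (d : ℂ)⁻¹ else 0 := by
  have hd : ((Real.sqrt d : ℝ) : ℂ)⁻¹ * ((Real.sqrt d : ℝ) : ℂ)⁻¹ = (d : ℂ)⁻¹ := by
    rw [← mul_inv, ← Complex.ofReal_mul, Real.mul_self_sqrt (Nat.cast_nonneg d)]
    push_cast
    rfl
  by_cases h1 : a = j <;> by_cases h2 : a' = l <;> simp [phiPlus, proj, phiPlusVec, h1, h2, hd]

lemma idTensor_phiPlus {d : ℕ} {m : Type*} [Fintype m] (U : Matrix (Fin d × m) (Fin d × m) ℂ)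
    (χ : Matrix m m ℂ) :
    idTensor (fun ρ : Mat d => trSnd (U * (ρ ⊗ₖ χ) * Uᴴ)) (phiPlus d) =
      (d : ℂ)⁻¹ • trSnd (choiState U χ) := by
  ext ⟨a, s⟩ ⟨a', s'⟩
  simp [idTensor, trSnd, conj_kronecker_apply, phiPlus_apply, ite_and, Finset.mul_sum]

lemma isDensity_smul_trSnd_choiState {n m : Type*} [Fintype n] [Fintype m] [DecidableEq n]
    [DecidableEq m] [Nonempty n] {U : Matrix (n × m) (n × m) ℂ} (hU : U ∈ unitaryGroup (n × m) ℂ)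
    {χ : Matrix m m ℂ} (hχ : IsDensity χ) :
    IsDensity ((Fintype.card n : ℂ)⁻¹ • trSnd (choiState U χ)) := by
  refine ⟨(posSemidef_choiState U hχ.1).trSnd.smul (by positivity), ?_⟩
  rw [trace_smul, trace_trSnd, trace_choiState U χ hU, hχ.2, mul_one, smul_eq_mul,
    inv_mul_cancel₀ (by simp)]

lemma trSE_conj_kronecker_eq_of_choiState_eq {n e o : Type*} [Fintype n] [Fintype e] [Fintype o]
    [DecidableEq n] [DecidableEq e] [DecidableEq o] {U : Matrix (n × e × o) (n × e × o) ℂ}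
    (hU : U ∈ unitaryGroup (n × e × o) ℂ)
    {χ : Matrix (e × o) (e × o) ℂ} (hχ : χ.trace = 1) {w : n × n → ℂ}
    {η : Matrix (e × o) (e × o) ℂ} (hΩ : choiState U χ = proj w ⊗ₖ η) {ρ : Matrix n n ℂ}
    (hρ : ρ.trace = 1) : trSE (U * (ρ ⊗ₖ χ) * Uᴴ) = η.trace⁻¹ • trFst η := by
  obtain ⟨X, hX⟩ := exists_conj_kronecker_eq_kronecker U χ hΩ ρ
  have htr : X.trace * η.trace = 1 := by
    rw [← trace_kronecker, ← hX, trace_unitary_conj hU, trace_kronecker, hρ, hχ, mul_one]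
  rw [hX, trSE_kronecker, eq_inv_of_mul_eq_one_left htr]

/-- Every measurement has nonzero back-action: if the result channel of the procedure
`ρ ↦ U(ρ ⊗ χ)U†` is non-constant on density matrices, then the mutual information retained
between the ancilla and the system is strictly below `2 log d`. -/
theorem stmt_7 (d e o : ℕ)
    (U : Matrix (Fin d × Fin e × Fin o) (Fin d × Fin e × Fin o) ℂ)
    (hU : U ∈ Matrix.unitaryGroup (Fin d × Fin e × Fin o) ℂ)
    (χ : Matrix (Fin e × Fin o) (Fin e × Fin o) ℂ) (hχ : IsDensity χ)
    (R : Mat d → Mat o) (hR : R = fun ρ => trSE (U * (ρ ⊗ₖ χ) * Uᴴ))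
    (D : Mat d → Mat d) (hD : D = fun ρ => trSnd (U * (ρ ⊗ₖ χ) * Uᴴ))
    (hmeas : ∃ ρ σ : Mat d, IsDensity ρ ∧ IsDensity σ ∧ R ρ ≠ R σ) :
    mutualInfo (idTensor D (phiPlus d)) < 2 * Real.log d := by
  obtain ⟨ρ, σ, hρ, hσ, hRne⟩ := hmeas
  rcases Nat.eq_zero_or_pos d with rfl | hd
  · exact (hRne (congrArg R (Subsingleton.elim ρ σ))).elim
  have hτ : idTensor D (phiPlus d) = (d : ℂ)⁻¹ • trSnd (choiState U χ) :=
    hD ▸ idTensor_phiPlus U χ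
  have hτ_density : IsDensity (idTensor D (phiPlus d)) := by
    have : Nonempty (Fin d) := ⟨⟨0, hd⟩⟩
    simpa [hτ] using isDensity_smul_trSnd_choiState hU hχ
  by_contra hI
  obtain ⟨w, hw, hτw⟩ := hτ_density.exists_eq_proj_of_entropy_nonpos <| by
    have := hτ_density.mutualInfo_add_entropy_le
    simp only [Fintype.card_fin] at this
    linarith
  obtain ⟨ξ, hξ⟩ := exists_eq_proj_kronecker_of_trSnd_eq_proj
    ((posSemidef_choiState U hχ.1).smul (by positivity : (0 : ℂ) ≤ (d : ℂ)⁻¹)) hw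
    (by rw [trSnd_smul, ← hτ, hτw])
  have hΩ : choiState U χ = proj w ⊗ₖ ((d : ℂ) • ξ) := by
    rw [kronecker_smul, ← hξ, smul_smul, mul_inv_cancel₀ (by positivity), one_smul]
  subst hR
  apply hRne
  dsimp only
  rw [trSE_conj_kronecker_eq_of_choiState_eq hU hχ.2 hΩ hρ.2,
    trSE_conj_kronecker_eq_of_choiState_eq hU hχ.2 hΩ hσ.2]

end
end

section
/- Consider the dephased swap measurement: the system S and observer O are each ℂ^d, the environment E is ℂ^d initialized in |0⟩, the observer is initialized in a density matrix τ, and the total unitary is U = V_{OE} · SWAP_{SO}, where V_{OE} is a copying unitary with V(|k⟩_O ⊗ |0⟩_E) = |k⟩_O ⊗ |k⟩_E for every basis vector |k⟩. Then for every density matrix ρ on ℂ^d, the joint system-observer state after the measurement is a product of the constant disturbed state and the dephased result: tr_E[U (ρ ⊗ |0⟩⟨0|_E ⊗ τ) U†] = τ_S ⊗ Δ(ρ)_O, where Δ(ρ) = ∑_k ⟨k|ρ|k⟩ |k⟩⟨k|. In particular, unlike a von Neumann measurement, there is no correlation between the post-measurement system and the observer's memory. -/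
open Matrix Kronecker
open scoped ComplexOrder

noncomputable section

/-- The basis vector `|0⟩` of `ℂ^d`. -/
def e0vec (d : ℕ) : Fin d → ℂ := fun i => if (i : ℕ) = 0 then 1 else 0

/-- The SWAP between the first (system) and third (observer) factors of `S ⊗ E ⊗ O`. -/
def swapSO (d : ℕ) : Matrix (Fin d × Fin d × Fin d) (Fin d × Fin d × Fin d) ℂ :=
  Matrix.of fun p q => if p.1 = q.2.2 ∧ p.2.1 = q.2.1 ∧ p.2.2 = q.1 then 1 else 0

/-- Partial trace over the middle (environment) factor of `S ⊗ E ⊗ O`. -/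
def trMid {a b c : Type*} [Fintype b]
    (X : Matrix (a × b × c) (a × b × c) ℂ) : Matrix (a × c) (a × c) ℂ :=
  Matrix.of fun p q => ∑ j : b, X (p.1, j, p.2) (q.1, j, q.2)

/-- The dephasing channel in the standard basis. -/
def deph {d : ℕ} (ρ : Mat d) : Mat d := Matrix.diagonal fun i => ρ i i

/-!
After the swap the system carries `τ` and the observer carries `ρ`, next to the environment's
`|0⟩`. Since `V (|0⟩ ⊗ |k⟩) = |k⟩ ⊗ |k⟩`, the restriction of `V` to `|0⟩ ⊗ ℂ^d` is the copying
isometry `C : |k⟩ ↦ |k⟩ ⊗ |k⟩`, so environment and observer end up in `C ρ C†`. Its entries are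
`ρ k l` at `(|kk⟩, |ll⟩)`, and tracing out the environment keeps exactly the diagonal of `ρ`.
-/

def vecKronOne {a : Type*} (ψ : a → ℂ) (b : Type*) [DecidableEq b] : Matrix (a × b) b ℂ :=
  Matrix.of fun p k => ψ p.1 * if p.2 = k then 1 else 0

def copyIsometry (n : Type*) [DecidableEq n] : Matrix (n × n) n ℂ :=
  Matrix.of fun p k => if p.1 = k ∧ p.2 = k then 1 else 0

section

variable {a b c : Type*}

theorem proj_kronecker_eq [Fintype b] [DecidableEq b] (ψ : a → ℂ) (ρ : Matrix b b ℂ) :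
    proj ψ ⊗ₖ ρ = vecKronOne ψ b * ρ * (vecKronOne ψ b)ᴴ := by
  ext ⟨i, j⟩ ⟨i', j'⟩
  simp [proj, vecKronOne, mul_apply, apply_ite (starRingEnd ℂ)]
  ring

theorem swapSO_mul_kronecker_mul_conjTranspose (d : ℕ) (A B C : Mat d) :
    swapSO d * (A ⊗ₖ (B ⊗ₖ C)) * (swapSO d)ᴴ = C ⊗ₖ (B ⊗ₖ A) := by
  ext ⟨i, j, k⟩ ⟨i', j', k'⟩
  simp [swapSO, mul_apply, Fintype.sum_prod_type, ite_and, apply_ite (starRingEnd ℂ)]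
  ring

theorem one_kronecker_mul_kronecker_mul_conjTranspose [Fintype a] [DecidableEq a] [Fintype b]
    (W : Matrix b b ℂ) (A : Matrix a a ℂ) (X : Matrix b b ℂ) :
    (1 ⊗ₖ W) * (A ⊗ₖ X) * (1 ⊗ₖ W)ᴴ = A ⊗ₖ (W * X * Wᴴ) := by
  rw [conjTranspose_kronecker, conjTranspose_one, ← mul_kronecker_mul, ← mul_kronecker_mul,
    one_mul, mul_one]

theorem trMid_kronecker [Fintype b] (A : Matrix a a ℂ) (Y : Matrix (b × c) (b × c) ℂ) :
    trMid (A ⊗ₖ Y) = A ⊗ₖ trFst Y := by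
  ext ⟨i, k⟩ ⟨i', k'⟩
  simp [trMid, trFst, Finset.mul_sum]

theorem trFst_copyIsometry_mul_mul_conjTranspose {d : ℕ} (ρ : Mat d) :
    trFst (copyIsometry (Fin d) * ρ * (copyIsometry (Fin d))ᴴ) = deph ρ := by
  ext i j
  simp [trFst, copyIsometry, deph, mul_apply, diagonal_apply, ite_and, apply_ite (starRingEnd ℂ)]
  split_ifs with h <;> simp only [h]

end

theorem stmt_14_general (d : ℕ)
    (τ : Mat d)
    (V : Matrix (Fin d × Fin d) (Fin d × Fin d) ℂ)
    (hVcopy : ∀ k : Fin d,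
      V *ᵥ (fun p => e0vec d p.1 * (if p.2 = k then 1 else 0)) =
        fun p => if p.1 = k ∧ p.2 = k then 1 else 0)
    (U : Matrix (Fin d × Fin d × Fin d) (Fin d × Fin d × Fin d) ℂ)
    (hU : U = ((1 : Mat d) ⊗ₖ V) * swapSO d)
    (ρ : Mat d) :
    trMid (U * (ρ ⊗ₖ (proj (e0vec d) ⊗ₖ τ)) * Uᴴ) = τ ⊗ₖ deph ρ := by
  have hV : V * vecKronOne (e0vec d) (Fin d) = copyIsometry (Fin d) :=
    ext fun p k => congrFun (hVcopy k) p
  calc trMid (U * (ρ ⊗ₖ (proj (e0vec d) ⊗ₖ τ)) * Uᴴ)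
      = trMid ((1 ⊗ₖ V) * (τ ⊗ₖ (proj (e0vec d) ⊗ₖ ρ)) * (1 ⊗ₖ V)ᴴ) := by
        rw [hU, conjTranspose_mul,
          ← swapSO_mul_kronecker_mul_conjTranspose d ρ (proj (e0vec d)) τ]
        simp only [Matrix.mul_assoc]
    _ = τ ⊗ₖ trFst (copyIsometry (Fin d) * ρ * (copyIsometry (Fin d))ᴴ) := by
        rw [one_kronecker_mul_kronecker_mul_conjTranspose, trMid_kronecker, proj_kronecker_eq,
          ← hV]
        simp only [conjTranspose_mul, Matrix.mul_assoc]
    _ = τ ⊗ₖ deph ρ := by rw [trFst_copyIsometry_mul_mul_conjTranspose]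

/-- The dephased swap measurement `U = V_{OE} · SWAP_{SO}` leaves the system and observer in
the uncorrelated product `τ ⊗ Δ(ρ)` of the constant disturbed state and the dephased result. -/
theorem stmt_14 (d : ℕ) (hd : 0 < d)
    (τ : Mat d) (hτ : IsDensity τ)
    (V : Matrix (Fin d × Fin d) (Fin d × Fin d) ℂ)
    (hV : V ∈ Matrix.unitaryGroup (Fin d × Fin d) ℂ)
    (hVcopy : ∀ k : Fin d,
      V *ᵥ (fun p => e0vec d p.1 * (if p.2 = k then 1 else 0)) =
        fun p => if p.1 = k ∧ p.2 = k then 1 else 0)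
    (U : Matrix (Fin d × Fin d × Fin d) (Fin d × Fin d × Fin d) ℂ)
    (hU : U = ((1 : Mat d) ⊗ₖ V) * swapSO d)
    (ρ : Mat d) (hρ : IsDensity ρ) :
    trMid (U * (ρ ⊗ₖ (proj (e0vec d) ⊗ₖ τ)) * Uᴴ) = τ ⊗ₖ deph ρ :=
  stmt_14_general d τ V hVcopy U hU ρ
end
end

section
/- Let d ≥ 2, let |0⟩, |ψ'⟩ be orthonormal vectors in ℂ^d, and on (ℂ^d)^{⊗3} let H = S_{12} + S_{13} (simultaneous swap coupling of the system to two observers). Write ψ = a|0⟩ + b|ψ'⟩ with a, b ∈ ℂ, |a|² + |b|² = 1. Then for every t ∈ ℝ, e^{−itH}(ψ⊗|0⟩⊗|0⟩) = e^{−2it}( a·|0⟩⊗|0⟩⊗|0⟩ + (b/√3)·e₂ ) − (2b/√6)·e^{it}·e₃, where e₂ = (1/√3)(|ψ'⟩⊗|0⟩⊗|0⟩ + |0⟩⊗|ψ'⟩⊗|0⟩ + |0⟩⊗|0⟩⊗|ψ'⟩) and e₃ = (1/√6)(−2|ψ'⟩⊗|0⟩⊗|0⟩ + |0⟩⊗|ψ'⟩⊗|0⟩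 + |0⟩⊗|0⟩⊗|ψ'⟩). -/
open Matrix Kronecker
open scoped ComplexOrder

noncomputable section

/-- Elementary tensor of three vectors on `(ℂ^d)^{⊗3}`. -/
def tp3 {d : ℕ} (x y z : Fin d → ℂ) : Fin d × Fin d × Fin d → ℂ :=
  fun p => x p.1 * y p.2.1 * z p.2.2

/-- The unitary swapping the first and second tensor factors. -/
def S12 (d : ℕ) : Matrix (Fin d × Fin d × Fin d) (Fin d × Fin d × Fin d) ℂ :=
  Matrix.of fun p q => if p.1 = q.2.1 ∧ p.2.1 = q.1 ∧ p.2.2 = q.2.2 then 1 else 0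

/-- The unitary swapping the first and third tensor factors. -/
def S13 (d : ℕ) : Matrix (Fin d × Fin d × Fin d) (Fin d × Fin d × Fin d) ℂ :=
  Matrix.of fun p q => if p.1 = q.2.2 ∧ p.2.1 = q.2.1 ∧ p.2.2 = q.1 then 1 else 0

/-!
The vectors `|000⟩`, `e₂`, `e₃` are eigenvectors of `H = S₁₂ + S₁₃` with eigenvalues `2, 2, -1`
(each swap permutes the three tensors with one factor `ψ'`), and
`ψ ⊗ |0⟩ ⊗ |0⟩ = a|000⟩ + (b/√3) e₂ - (2b/√6) e₃`. Since `exp M v = exp c • v` whenever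
`M v = c • v` (apply the exponential series termwise), `e^{-itH}` multiplies each component by
its phase.
-/

open scoped Matrix.Norms.Operator in
theorem Matrix.exp_mulVec_of_mulVec_eq_smul {𝕂 n : Type*} [RCLike 𝕂] [Fintype n] [DecidableEq n]
    {M : Matrix n n 𝕂} {v : n → 𝕂} {c : 𝕂} (h : M *ᵥ v = c • v) :
    NormedSpace.exp M *ᵥ v = NormedSpace.exp c • v := by
  have hpow (k : ℕ) : M ^ k *ᵥ v = c ^ k • v := by
    induction k with
    | zero => simp
    | succ k ih => rw [pow_succ, ← mulVec_mulVec, h, mulVec_smul, ih, smul_smul, pow_succ']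
  have hM := (NormedSpace.exp_series_hasSum_exp' (𝕂 := 𝕂) M).map (mulVec.addMonoidHomLeft v)
    (continuous_id.matrix_mulVec continuous_const)
  have hc := (NormedSpace.exp_series_hasSum_exp' (𝕂 := 𝕂) c).smul_const v
  refine hM.unique ?_
  convert hc using 2 with k
  change (_ • M ^ k) *ᵥ v = _
  rw [smul_mulVec, hpow, smul_smul, smul_eq_mul]

theorem S12_mulVec {d : ℕ} (f : Fin d × Fin d × Fin d → ℂ) :
    S12 d *ᵥ f = fun p => f (p.2.1, p.1, p.2.2) := by
  funext p
  simp [S12, mulVec, dotProduct, Fintype.sum_prod_type, ite_and]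

theorem S13_mulVec {d : ℕ} (f : Fin d × Fin d × Fin d → ℂ) :
    S13 d *ᵥ f = fun p => f (p.2.2, p.2.1, p.1) := by
  funext p
  simp [S13, mulVec, dotProduct, Fintype.sum_prod_type, ite_and]

theorem S12_mulVec_tp3 {d : ℕ} (x y z : Fin d → ℂ) : S12 d *ᵥ tp3 x y z = tp3 y x z := by
  rw [S12_mulVec]; funext p; simp only [tp3]; ring

theorem S13_mulVec_tp3 {d : ℕ} (x y z : Fin d → ℂ) : S13 d *ᵥ tp3 x y z = tp3 z y x := by
  rw [S13_mulVec]; funext p; simp only [tp3]; ring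

theorem tp3_add_smul_left {d : ℕ} (a b : ℂ) (x x' y z : Fin d → ℂ) :
    tp3 (a • x + b • x') y z = a • tp3 x y z + b • tp3 x' y z := by
  funext p; simp only [tp3, Pi.add_apply, Pi.smul_apply, smul_eq_mul]; ring

theorem S12_add_S13_mulVec_tp3_self {d : ℕ} (x : Fin d → ℂ) :
    (S12 d + S13 d) *ᵥ tp3 x x x = (2 : ℂ) • tp3 x x x := by
  rw [add_mulVec, S12_mulVec_tp3, S13_mulVec_tp3]; module

theorem S12_add_S13_mulVec_symm {d : ℕ} (x y : Fin d → ℂ) :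
    (S12 d + S13 d) *ᵥ (tp3 y x x + tp3 x y x + tp3 x x y) =
      (2 : ℂ) • (tp3 y x x + tp3 x y x + tp3 x x y) := by
  simp only [add_mulVec, mulVec_add, S12_mulVec_tp3, S13_mulVec_tp3]; module

theorem S12_add_S13_mulVec_antisymm {d : ℕ} (x y : Fin d → ℂ) :
    (S12 d + S13 d) *ᵥ ((-2 : ℂ) • tp3 y x x + tp3 x y x + tp3 x x y) =
      (-1 : ℂ) • ((-2 : ℂ) • tp3 y x x + tp3 x y x + tp3 x x y) := by
  simp only [add_mulVec, mulVec_add, mulVec_smul, S12_mulVec_tp3, S13_mulVec_tp3]; module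

theorem stmt_16_general (d : ℕ) (v0 ψ' : Fin d → ℂ) (a b : ℂ)
    (e₂ e₃ : Fin d × Fin d × Fin d → ℂ)
    (he₂ : e₂ = ((Real.sqrt 3 : ℂ))⁻¹ • (tp3 ψ' v0 v0 + tp3 v0 ψ' v0 + tp3 v0 v0 ψ'))
    (he₃ : e₃ = ((Real.sqrt 6 : ℂ))⁻¹ •
      ((-2 : ℂ) • tp3 ψ' v0 v0 + tp3 v0 ψ' v0 + tp3 v0 v0 ψ'))
    (t : ℝ) :
    NormedSpace.exp ((-(Complex.I * (t : ℂ))) • (S12 d + S13 d)) *ᵥ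
        tp3 (a • v0 + b • ψ') v0 v0 =
      Complex.exp (-(2 * Complex.I * (t : ℂ))) •
          (a • tp3 v0 v0 v0 + (b / (Real.sqrt 3 : ℂ)) • e₂) -
        ((2 * b / (Real.sqrt 6 : ℂ)) * Complex.exp (Complex.I * (t : ℂ))) • e₃ := by
  have evolve (v : Fin d × Fin d × Fin d → ℂ) (c : ℂ) (hv : (S12 d + S13 d) *ᵥ v = c • v) :
      NormedSpace.exp ((-(Complex.I * t)) • (S12 d + S13 d)) *ᵥ v =
        Complex.exp (-(Complex.I * t) * c) • v := by
    rw [Complex.exp_eq_exp_ℂ]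
    exact exp_mulVec_of_mulVec_eq_smul (by rw [smul_mulVec, hv, smul_smul])
  have hinit : tp3 (a • v0 + b • ψ') v0 v0 =
      a • tp3 v0 v0 v0 + (b / (Real.sqrt 3 : ℂ)) • e₂ + (-(2 * b / (Real.sqrt 6 : ℂ))) • e₃ := by
    have hs3 : ((Real.sqrt 3 : ℂ)) ^ 2 = 3 := by
      rw [← Complex.ofReal_pow, Real.sq_sqrt (by norm_num)]; norm_num
    have hs6 : ((Real.sqrt 6 : ℂ)) ^ 2 = 6 := by
      rw [← Complex.ofReal_pow, Real.sq_sqrt (by norm_num)]; norm_num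
    rw [tp3_add_smul_left, he₂, he₃]
    match_scalars <;> field_simp <;> simp only [hs3, hs6] <;> ring
  have e₂_eigen : (S12 d + S13 d) *ᵥ e₂ = (2 : ℂ) • e₂ := by
    rw [he₂, mulVec_smul, S12_add_S13_mulVec_symm, smul_comm]
  have e₃_eigen : (S12 d + S13 d) *ᵥ e₃ = (-1 : ℂ) • e₃ := by
    rw [he₃, mulVec_smul, S12_add_S13_mulVec_antisymm, smul_comm]
  rw [hinit, mulVec_add, mulVec_add, mulVec_smul, mulVec_smul, mulVec_smul,
    evolve _ _ (S12_add_S13_mulVec_tp3_self v0), evolve _ _ e₂_eigen, evolve _ _ e₃_eigen,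
    show -(Complex.I * t) * 2 = -(2 * Complex.I * t) by ring,
    show -(Complex.I * t) * -1 = Complex.I * t by ring]
  module

/-- Explicit time evolution under the simultaneous-swap Hamiltonian `H = S₁₂ + S₁₃` of the
initial state `(a|0⟩ + b|ψ'⟩) ⊗ |0⟩ ⊗ |0⟩`. -/
theorem stmt_16 (d : ℕ) (hd : 2 ≤ d) (v0 ψ' : Fin d → ℂ)
    (hv0 : star v0 ⬝ᵥ v0 = 1) (hψ' : star ψ' ⬝ᵥ ψ' = 1) (horth : star v0 ⬝ᵥ ψ' = 0)
    (a b : ℂ) (hab : Complex.normSq a + Complex.normSq b = 1)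
    (e₂ e₃ : Fin d × Fin d × Fin d → ℂ)
    (he₂ : e₂ = ((Real.sqrt 3 : ℂ))⁻¹ • (tp3 ψ' v0 v0 + tp3 v0 ψ' v0 + tp3 v0 v0 ψ'))
    (he₃ : e₃ = ((Real.sqrt 6 : ℂ))⁻¹ •
      ((-2 : ℂ) • tp3 ψ' v0 v0 + tp3 v0 ψ' v0 + tp3 v0 v0 ψ'))
    (t : ℝ) :
    NormedSpace.exp ((-(Complex.I * (t : ℂ))) • (S12 d + S13 d)) *ᵥ
        tp3 (a • v0 + b • ψ') v0 v0 =
      Complex.exp (-(2 * Complex.I * (t : ℂ))) •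
          (a • tp3 v0 v0 v0 + (b / (Real.sqrt 3 : ℂ)) • e₂) -
        ((2 * b / (Real.sqrt 6 : ℂ)) * Complex.exp (Complex.I * (t : ℂ))) • e₃ :=
  stmt_16_general d v0 ψ' a b e₂ e₃ he₂ he₃ t

end
end
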